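/- arXiv:math/0604458 — 4 statements merged into one kernel-verified Lean document; each statement's English description precedes it below -/
import Mathlib

section
/- Let R be a commutative ring, r ≥ 1 an integer, s ∈ R, and R' = R[t]/(t^r − s). For every integer l with 0 < l ≤ r, the preimage under the canonical ring map R → R' of the ideal t^l R' generated by t^l is the principal ideal sR; that is, for a ∈ R, the image of a in R' lies in t^l R' if and only if a ∈ sR. -/
open Polynomial

/-!
Since `l ≤ r`, the element `t ^ r - s` is congruent to `-s` modulo `t ^ l`, so the preimage of
`t ^ l R'` in `R[t]` is the ideal `(t ^ l, s)`. A constant `a` lies in that ideal exactly when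
`a ∈ sR`: one direction is clear, and for the other take constant coefficients, which kill
`t ^ l` because `l ≠ 0`.
-/

namespace Polynomial

variable {R : Type*} [CommRing R]

theorem span_X_pow_X_pow_sub_C {l r : ℕ} (hlr : l ≤ r) (s : R) :
    Ideal.span {X ^ l, X ^ r - C s} = Ideal.span {(X : R[X]) ^ l, C s} := by
  have hsplit : (X : R[X]) ^ r - C s = -C s + X ^ l * X ^ (r - l) := by
    rw [← pow_add, Nat.add_sub_cancel' hlr]
    ring
  rw [hsplit, Ideal.span_pair_add_left_mul, Ideal.span_pair_comm, Ideal.span_insert_neg,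
    Ideal.span_pair_comm]

theorem C_mem_span_X_pow_C_iff {l : ℕ} (hl : l ≠ 0) (s a : R) :
    C a ∈ Ideal.span {(X : R[X]) ^ l, C s} ↔ a ∈ Ideal.span {s} := by
  constructor
  · intro h
    have hmap := Ideal.mem_map_of_mem (constantCoeff (R := R)) h
    simpa [Ideal.map_span, Set.image_pair, hl.symm] using hmap
  · intro h
    obtain ⟨c, rfl⟩ := Ideal.mem_span_singleton'.mp h
    rw [C_mul]
    exact Ideal.mul_mem_left _ _ (Ideal.subset_span (Set.mem_insert_of_mem _ rfl))

end Polynomial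

theorem mem_span_tpow_iff_mem_span_s_general
    (R : Type*) [CommRing R] (r : ℕ) (s : R)
    (l : ℕ) (hl0 : 0 < l) (hlr : l ≤ r) (a : R) :
    Ideal.Quotient.mk (Ideal.span {(X : R[X]) ^ r - C s}) (C a) ∈
      Ideal.span {Ideal.Quotient.mk (Ideal.span {(X : R[X]) ^ r - C s}) X ^ l} ↔
    a ∈ Ideal.span {s} := by
  rw [← map_pow, ← Set.image_singleton (f := Ideal.Quotient.mk _), ← Ideal.map_span,
    Ideal.mem_quotient_iff_mem_sup, ← Ideal.span_insert, span_X_pow_X_pow_sub_C hlr, C_mem_span_X_pow_C_iff hl0.ne']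

/-- Let `R` be a commutative ring, `r ≥ 1`, `s ∈ R`, and `R' = R[t]/(t^r - s)`.
For every integer `l` with `0 < l ≤ r`, the preimage under the canonical map `R → R'`
of the ideal generated by `t^l` is the principal ideal `sR`: for `a ∈ R`, the image of
`a` in `R'` lies in `t^l R'` if and only if `a ∈ sR`. -/
theorem mem_span_tpow_iff_mem_span_s
    (R : Type*) [CommRing R] (r : ℕ) (hr : 1 ≤ r) (s : R)
    (l : ℕ) (hl0 : 0 < l) (hlr : l ≤ r) (a : R) :
    Ideal.Quotient.mk (Ideal.span {(X : R[X]) ^ r - C s}) (C a) ∈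
      Ideal.span {Ideal.Quotient.mk (Ideal.span {(X : R[X]) ^ r - C s}) X ^ l} ↔
    a ∈ Ideal.span {s} :=
  mem_span_tpow_iff_mem_span_s_general R r s l hl0 hlr a
end

section
/- Let R be a commutative noetherian local ring, s ∈ R a nonzerodivisor, and r ≥ 1 an integer. Let E be a finite free R-module and E = E_0 ⊇ E_1 ⊇ ⋯ ⊇ E_{r−1} ⊇ E_r = sE a descending chain of R-submodules such that each E_i is a free R-module and, for each 0 ≤ i < r, the quotient E_i/E_{i+1} is a free R/sR-module. Then there exist an R-basis e_1, …, e_n of E and integers a_1, …, a_n with 0 ≤ a_k < r such that for every 0 ≤ i ≤ r one has E_i = (Σ_{k : a_k ≥ i} R·e_k) + (Σ_{k : a_k < i} R·(s·e_k)). -/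
/-- `Q` is a free module over `R ⧸ I`.  (For a module `Q` killed by `I`, `R`-linear maps
and isomorphisms coincide with `R ⧸ I`-linear ones, so this says exactly that `Q`, with
its induced `R ⧸ I`-module structure, is free.) -/
def IsFreeOver (R : Type*) [CommRing R] (I : Ideal R)
    (Q : Type v) [AddCommGroup Q] [Module R Q] : Prop :=
  ∃ ι : Type v, Nonempty (Q ≃ₗ[R] (ι →₀ R ⧸ I))

/-!
Lift bases of the graded pieces `E_i/E_{i+1}` (free over `R/sR`) to families `x_{i,j} ∈ E_i` of
level `i`. By descending induction, `E_i` is spanned by the lifts of level `≥ i` together with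
`E_r = sE`; at `i = 0` Nakayama shows that the lifts span `E`, and the formula for `E_i` follows.

A relation `∑ c_k x_k = 0` has all `c_k ∈ sR`: once the coefficients of the levels below `i` are
divisible by `s`, the level-`i` part of the relation lies in `E_{i+1}`, so its coefficients vanish
in `R/sR`. Since `s` is regular on `E`, dividing by `s` gives a new relation, so the coefficients
lie in `⋂ₘ sᵐR = 0` (Krull). If `s` is a unit, every `E_i` is `E` and any basis works, at level
`0`.
-/

open Submodule Set Finsupp

section

universe v

variable {R : Type*} {E : Type v} [CommRing R] [AddCommGroup E] [Module R E]

theorem antitoneOn_nat_Iic_of_succ_le {α : Type*} [Preorder α] {f : ℕ → α} {n : ℕ}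
    (hf : ∀ i < n, f (i + 1) ≤ f i) : AntitoneOn f (Iic n) := by
  intro i _ j hj hij
  induction j, hij using Nat.le_induction with
  | base => exact le_rfl
  | succ j _ ih => exact (hf j hj).trans (ih (Nat.le_of_succ_le hj))

theorem linearCombination_mem_of_forall_mem {κ : Type*} {x : κ → E} {N : Submodule R E}
    (hx : ∀ k, x k ∈ N) (c : κ →₀ R) : linearCombination R x c ∈ N :=
  span_le.mpr (range_subset_iff.mpr hx)
    (range_linearCombination (v := x) R ▸ LinearMap.mem_range_self _ c)

theorem IsFreeOver.exists_lift {I : Ideal R} {A B : Submodule R E}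
    (h : IsFreeOver R I (A ⧸ B.comap A.subtype)) :
    ∃ (ι : Type v) (x : ι → E), (∀ j, x j ∈ A) ∧ A ≤ span R (range x) ⊔ B ∧
      ∀ c : ι →₀ R, linearCombination R x c ∈ B → ∀ j, c j ∈ I := by
  obtain ⟨ι, ⟨ε⟩⟩ := h
  set p := B.comap A.subtype
  choose ξ hξ using fun j => p.mkQ_surjective (ε.symm (single j 1))
  have hred : ε.toLinearMap ∘ₗ p.mkQ ∘ₗ linearCombination R ξ =
      mapRange.linearMap (Algebra.linearMap R (R ⧸ I)) := by
    refine lhom_ext fun j b => ?_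
    simp [hξ, Algebra.smul_def]
  have hx : ∀ c, linearCombination R (fun j => (ξ j : E)) c =
      A.subtype (linearCombination R ξ c) := fun c => by
    rw [apply_linearCombination]; rfl
  have hB : ∀ c, linearCombination R (fun j => (ξ j : E)) c ∈ B ↔
      mapRange (Ideal.Quotient.mk I) (map_zero _) c = 0 := fun c => by
    rw [hx, ← mem_comap, ← Quotient.mk_eq_zero, ← mkQ_apply, ← ε.map_eq_zero_iff]
    exact iff_of_eq (congrArg (· = 0) (LinearMap.congr_fun hred c))
  refine ⟨ι, fun j => ξ j, fun j => (ξ j).2, fun y hy => ?_, fun c hc j => ?_⟩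
  · obtain ⟨c, hc⟩ := mapRange_surjective _ (map_zero _) Ideal.Quotient.mk_surjective
      (ε (p.mkQ ⟨y, hy⟩))
    have hmk : p.mkQ ⟨y, hy⟩ = p.mkQ (linearCombination R ξ c) :=
      ε.injective (hc.symm.trans (LinearMap.congr_fun hred c).symm)
    have hyc : y - linearCombination R (fun j => (ξ j : E)) c ∈ B := by
      simpa [hx, p] using (Submodule.Quotient.eq p).mp hmk
    rw [← sub_add_cancel y (linearCombination R _ c)]
    have hspan : linearCombination R (fun j => (ξ j : E)) c ∈ span R (range fun j => (ξ j : E)) :=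
      linearCombination_mem_of_forall_mem (fun j => subset_span (mem_range_self j)) c
    exact add_mem (mem_sup_right hyc) (mem_sup_left hspan)
  · simpa [Ideal.Quotient.eq_zero_iff_mem] using DFunLike.congr_fun ((hB c).mp hc) j

theorem le_span_sup_of_forall_le_span_sup_succ {F : ℕ → Submodule R E} {r : ℕ} {κ : Type*}
    {x : κ → E} {a : κ → ℕ} (h : ∀ i < r, F i ≤ span R (x '' {k | i ≤ a k}) ⊔ F (i + 1))
    {i : ℕ} (hi : i ≤ r) : F i ≤ span R (x '' {k | i ≤ a k}) ⊔ F r := by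
  induction hi using Nat.decreasingInduction with
  | self => exact le_sup_right
  | of_succ i hi ih =>
    have hmono : span R (x '' {k | i + 1 ≤ a k}) ≤ span R (x '' {k | i ≤ a k}) :=
      span_mono (image_mono fun k hk => (Nat.le_succ i).trans hk)
    exact (h i hi).trans (sup_le le_sup_left (ih.trans (sup_le_sup_right hmono _)))

theorem span_eq_top_of_le_span_sup_map_smul [IsLocalRing R] [Module.Finite R E] {s : R}
    (hs : ¬IsUnit s) {S : Set E}
    (h : ⊤ ≤ span R S ⊔ (⊤ : Submodule R E).map (s • LinearMap.id)) : span R S = ⊤ := by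
  have hjac : Ideal.span {s} ≤ (⊥ : Ideal R).jacobson := by
    rwa [IsLocalRing.jacobson_eq_maximalIdeal ⊥ bot_ne_top, Ideal.span_singleton_le_iff_mem]
  refine top_le_iff.mp (le_of_le_smul_of_le_jacobson_bot Module.Finite.fg_top hjac ?_)
  rw [ideal_span_singleton_smul]
  exact h

theorem mem_of_sum_eq_zero_of_succ_le {F : ℕ → Submodule R E} {r : ℕ}
    (hF : AntitoneOn F (Iic r)) {v : Fin r → E} (hv : ∀ i : Fin r, v i ∈ F i)
    (hsum : ∑ i, v i = 0)
    (hstep : ∀ i : Fin r, v i ∈ F ((i : ℕ) + 1) → v i ∈ F r) (i : Fin r) :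
    v i ∈ F r := by
  induction i using WellFoundedLT.induction with
  | _ i ih =>
  refine hstep i ?_
  have hvi : v i = -∑ j ∈ Finset.univ.erase i, v j :=
    eq_neg_of_add_eq_zero_left ((Finset.add_sum_erase _ v (Finset.mem_univ i)).trans hsum)
  rw [hvi]
  refine neg_mem (sum_mem fun j hj => ?_)
  rcases (Finset.ne_of_mem_erase hj).lt_or_gt with hji | hij
  · exact hF (mem_Iic.mpr i.2) (mem_Iic.mpr le_rfl) i.2 (ih j hji)
  · exact hF (mem_Iic.mpr i.2) (mem_Iic.mpr j.2.le) hij (hv j)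

theorem linearCombination_mem_of_forall_mem_span_singleton {κ : Type*} {x : κ → E} {s : R}
    {N : Submodule R E} (hN : ∀ y : E, s • y ∈ N) {c : κ →₀ R}
    (hc : ∀ k, c k ∈ Ideal.span {s}) : linearCombination R x c ∈ N := by
  rw [linearCombination_apply, Finsupp.sum]
  refine sum_mem fun k _ => ?_
  obtain ⟨d, hd⟩ := Ideal.mem_span_singleton'.mp (hc k)
  rw [← hd, mul_smul]
  exact N.smul_mem d (hN _)

theorem Finsupp.exists_smul_eq_of_forall_mem_span_singleton {κ : Type*} {s : R} {c : κ →₀ R}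
    (hc : ∀ k, c k ∈ Ideal.span {s}) : ∃ d : κ →₀ R, s • d = c := by
  classical
  choose d hd using fun k => Ideal.mem_span_singleton.mp (hc k)
  refine ⟨onFinset c.support (fun k => if c k = 0 then 0 else d k) fun k hk => ?_, ?_⟩
  · simpa using fun h => hk (if_pos h)
  · ext k
    by_cases h : c k = 0 <;> simp [h, ← hd]

theorem mem_span_singleton_of_linearCombination_sigma_eq_zero {F : ℕ → Submodule R E} {r : ℕ}
    (hF : AntitoneOn F (Iic r)) {s : R} (hsF : ∀ y : E, s • y ∈ F r)
    {ι : Fin r → Type*} {y : ∀ i, ι i → E} (hy : ∀ (i : Fin r) j, y i j ∈ F i)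
    (hind : ∀ i (c : ι i →₀ R), linearCombination R (y i) c ∈ F ((i : ℕ) + 1) →
      ∀ j, c j ∈ Ideal.span {s})
    {c : (Σ i, ι i) →₀ R} (hc : linearCombination R (fun k => y k.1 k.2) c = 0)
    (k : Σ i, ι i) : c k ∈ Ideal.span {s} := by
  set v : Fin r → E := fun i => linearCombination R (y i) (c.split i)
  have hv : ∀ i : Fin r, v i ∈ F i := fun i => linearCombination_mem_of_forall_mem (hy i) _
  have hsum : ∑ i, v i = 0 := by
    rw [← hc, linearCombination_apply, sigma_sum]
    refine (Finset.sum_subset (Finset.subset_univ _) fun i _ hi => ?_).symm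
    have hci : c.split i = 0 :=
      not_not.mp fun h => hi ((mem_splitSupport_iff_nonzero c i).mpr h)
    simp [v, hci]
  have hstep : ∀ i : Fin r, v i ∈ F ((i : ℕ) + 1) → v i ∈ F r := fun i hi =>
    linearCombination_mem_of_forall_mem_span_singleton hsF (hind i _ hi)
  obtain ⟨i, j⟩ := k
  have hvi := mem_of_sum_eq_zero_of_succ_le hF hv hsum hstep i
  simpa [split_apply] using hind i _ (hF (mem_Iic.mpr i.2) self_mem_Iic i.2 hvi) j

theorem linearIndependent_of_forall_mem_span_singleton [IsNoetherianRing R] [IsLocalRing R]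
    {s : R} (hs : ¬IsUnit s) (hsE : IsSMulRegular E s) {κ : Type*} {x : κ → E}
    (h : ∀ c : κ →₀ R, linearCombination R x c = 0 → ∀ k, c k ∈ Ideal.span {s}) :
    LinearIndependent R x := by
  have hpow : ∀ m (c : κ →₀ R), linearCombination R x c = 0 →
      ∀ k, c k ∈ Ideal.span {s} ^ m := by
    intro m
    induction m with
    | zero => simp
    | succ m ih =>
      intro c hc k
      obtain ⟨d, rfl⟩ := exists_smul_eq_of_forall_mem_span_singleton (h c hc)
      have hd : linearCombination R x d = 0 :=
        hsE (show s • _ = s • 0 by rw [smul_zero, ← map_smul, hc])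
      rw [pow_succ', Finsupp.smul_apply, smul_eq_mul]
      exact Ideal.mul_mem_mul (Ideal.mem_span_singleton_self s) (ih d hd k)
  refine linearIndependent_iff.mpr fun c hc => Finsupp.ext fun k => ?_
  have hk : c k ∈ ⨅ m, Ideal.span {s} ^ m := mem_iInf _ |>.mpr fun m => hpow m c hc k
  rwa [Ideal.iInf_pow_eq_bot_of_isLocalRing _ (by rwa [Ne, Ideal.span_singleton_eq_top])] at hk

theorem eq_span_sup_span_smul_of_le {κ : Type*} {N : Submodule R E} {x : κ → E} {a : κ → ℕ}
    {i : ℕ} {s : R} (hx : ∀ k, i ≤ a k → x k ∈ N) (hsx : ∀ k, s • x k ∈ N)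
    (hN : N ≤ span R (x '' {k | i ≤ a k}) ⊔ span R (range fun k => s • x k)) :
    N = span R (x '' {k | i ≤ a k}) ⊔ span R ((fun k => s • x k) '' {k | a k < i}) := by
  refine le_antisymm (hN.trans (sup_le le_sup_left (span_le.mpr ?_)))
    (sup_le (span_le.mpr ?_) (span_le.mpr ?_))
  · rintro _ ⟨k, rfl⟩
    rcases lt_or_ge (a k) i with hk | hk
    · exact mem_sup_right (subset_span ⟨k, hk, rfl⟩)
    · exact mem_sup_left (smul_mem _ s (subset_span ⟨k, hk, rfl⟩))
  · rintro _ ⟨k, hk, rfl⟩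
    exact hx k hk
  · rintro _ ⟨k, -, rfl⟩
    exact hsx k

theorem exists_basis_of_isFreeOver [IsNoetherianRing R] [IsLocalRing R] [Module.Free R E]
    [Module.Finite R E] {s : R} (hs : s ∈ nonZeroDivisors R) (hu : ¬IsUnit s) {r : ℕ}
    {F : ℕ → Submodule R E} (hF : AntitoneOn F (Iic r)) (h0 : F 0 = ⊤)
    (hFr : F r = (⊤ : Submodule R E).map (s • LinearMap.id))
    (hquot : ∀ i < r, IsFreeOver R (Ideal.span {s}) (F i ⧸ (F (i + 1)).comap (F i).subtype)) :
    ∃ (n : ℕ) (b : Module.Basis (Fin n) R E) (a : Fin n → ℕ), (∀ k, a k < r) ∧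
      (∀ k, b k ∈ F (a k)) ∧ ∀ i ≤ r, F i ≤ span R (b '' {k | i ≤ a k}) ⊔ F r := by
  choose ι y hyF hyspan hyind using fun i : Fin r => (hquot i i.2).exists_lift
  set x : (Σ i, ι i) → E := fun k => y k.1 k.2
  have hsF : ∀ z : E, s • z ∈ F r := fun z => hFr ▸ ⟨z, trivial, rfl⟩
  have hspan : ∀ i ≤ r, F i ≤ span R (x '' {k | i ≤ k.1}) ⊔ F r := by
    refine fun i hi => le_span_sup_of_forall_le_span_sup_succ (fun i hi => ?_) hi
    refine (hyspan ⟨i, hi⟩).trans (sup_le_sup_right (span_mono ?_) _)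
    exact range_subset_iff.mpr fun j => ⟨⟨⟨i, hi⟩, j⟩, le_refl i, rfl⟩
  have htop : span R (range x) = ⊤ := by
    refine span_eq_top_of_le_span_sup_map_smul hu ?_
    simpa [h0, ← hFr] using hspan 0 (Nat.zero_le r)
  have hli : LinearIndependent R x :=
    linearIndependent_of_forall_mem_span_singleton hu
      (isRegular_iff_mem_nonZeroDivisors.mpr hs).isSMulRegular fun c hc =>
        mem_span_singleton_of_linearCombination_sigma_eq_zero hF hsF hyF hyind hc
  let b := Module.Basis.mk hli htop.ge
  have := Module.Finite.finite_basis b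
  let e := Finite.equivFin (Σ i, ι i)
  refine ⟨_, b.reindex e, fun k => (e.symm k).1, fun k => (e.symm k).1.2,
    fun k => by simpa [b] using hyF _ _, fun i hi => ?_⟩
  convert hspan i hi using 3
  rw [Module.Basis.coe_reindex, Module.Basis.coe_mk, image_comp]
  exact congrArg _ (e.symm.image_preimage {k | i ≤ k.1})

end

theorem parabolic_filtration_local_structure_general
    (R : Type*) [CommRing R] [IsNoetherianRing R] [IsLocalRing R]
    (s : R) (hs : s ∈ nonZeroDivisors R)
    (r : ℕ) (hr : 1 ≤ r)
    (E : Type v) [AddCommGroup E] [Module R E] [Module.Free R E] [Module.Finite R E]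
    (F : ℕ → Submodule R E)
    (hdesc : ∀ i < r, F (i + 1) ≤ F i)
    (h0 : F 0 = ⊤)
    (hrth : F r = (⊤ : Submodule R E).map (s • (LinearMap.id : E →ₗ[R] E)))
    (hquot : ∀ i < r, IsFreeOver R (Ideal.span {s})
      (↥(F i) ⧸ Submodule.comap (F i).subtype (F (i + 1)))) :
    ∃ (n : ℕ) (b : Module.Basis (Fin n) R E) (a : Fin n → ℕ),
      (∀ k, a k < r) ∧
      ∀ i ≤ r, F i =
        Submodule.span R ((fun k => b k) '' {k | i ≤ a k}) ⊔
        Submodule.span R ((fun k => s • b k) '' {k | a k < i}) := by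
  have hF : AntitoneOn F (Iic r) := antitoneOn_nat_Iic_of_succ_le hdesc
  have hsF : ∀ y : E, s • y ∈ F r := fun y => hrth ▸ ⟨y, trivial, rfl⟩
  obtain ⟨n, b, a, ha, hbF, hspan⟩ :
      ∃ (n : ℕ) (b : Module.Basis (Fin n) R E) (a : Fin n → ℕ), (∀ k, a k < r) ∧
        (∀ k, b k ∈ F (a k)) ∧ ∀ i ≤ r, F i ≤ span R (b '' {k | i ≤ a k}) ⊔ F r := by
    by_cases hu : IsUnit s
    · have hFr : F r = ⊤ := by
        rw [hrth, Submodule.map_top, LinearMap.range_eq_top]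
        exact fun y => ⟨hu.unit⁻¹ • y, smul_inv_smul hu.unit y⟩
      exact ⟨_, Module.finBasis R E, 0, fun _ => hr, fun _ => h0 ▸ mem_top,
        fun i _ => hFr ▸ le_sup_of_le_right le_top⟩
    · exact exists_basis_of_isFreeOver hs hu hF h0 hrth hquot
  have hFr : F r = span R (range fun k => s • b k) := by
    rw [hrth, ← b.span_eq, map_span, ← range_comp]
    rfl
  refine ⟨n, b, a, ha, fun i hi => eq_span_sup_span_smul_of_le ?_ ?_ (hFr ▸ hspan i hi)⟩
  · exact fun k hk => hF (mem_Iic.mpr hi) (mem_Iic.mpr (ha k).le) hk (hbF k)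
  · exact fun k => hF (mem_Iic.mpr hi) self_mem_Iic hi (hsF _)

/-- Let `R` be a commutative noetherian local ring, `s ∈ R` a nonzerodivisor, `r ≥ 1`.
Let `E` be a finite free `R`-module and `E = E_0 ⊇ E_1 ⊇ ⋯ ⊇ E_{r-1} ⊇ E_r = sE` a
descending chain of submodules with each `E_i` free over `R` and each `E_i/E_{i+1}`
(for `0 ≤ i < r`) free over `R/sR`.  Then there are a basis `e_1, …, e_n` of `E` and
integers `0 ≤ a_k < r` such that for all `0 ≤ i ≤ r`,
`E_i = Σ_{a_k ≥ i} R·e_k + Σ_{a_k < i} R·(s·e_k)`. -/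
theorem parabolic_filtration_local_structure
    (R : Type*) [CommRing R] [IsNoetherianRing R] [IsLocalRing R]
    (s : R) (hs : s ∈ nonZeroDivisors R)
    (r : ℕ) (hr : 1 ≤ r)
    (E : Type v) [AddCommGroup E] [Module R E] [Module.Free R E] [Module.Finite R E]
    (F : ℕ → Submodule R E)
    (hdesc : ∀ i < r, F (i + 1) ≤ F i)
    (h0 : F 0 = ⊤)
    (hrth : F r = (⊤ : Submodule R E).map (s • (LinearMap.id : E →ₗ[R] E)))
    (hfree : ∀ i ≤ r, Module.Free R (F i))
    (hquot : ∀ i < r, IsFreeOver R (Ideal.span {s})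
      (↥(F i) ⧸ Submodule.comap (F i).subtype (F (i + 1)))) :
    ∃ (n : ℕ) (b : Module.Basis (Fin n) R E) (a : Fin n → ℕ),
      (∀ k, a k < r) ∧
      ∀ i ≤ r, F i =
        Submodule.span R ((fun k => b k) '' {k | i ≤ a k}) ⊔
        Submodule.span R ((fun k => s • b k) '' {k | a k < i}) :=
  parabolic_filtration_local_structure_general R s hs r hr E F hdesc h0 hrth hquot
end

section
/- Fix a commutative ring R, an integer r ≥ 1, an element s ∈ R which is a nonzerodivisor, and set R' = R[t]/(t^r − s) with its ℤ/rℤ-grading. Let M be a ℤ/rℤ-graded R'-module which is finitely generated and projective as an R'-module, and let l be an integer with 0 ≤ l < r. Then the degree-zero component of the ℤ/rℤ-graded R'-module M/t^l M is a finitely generated projective R/sR-module. -/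
open Polynomial

/-- The ring `R' = R[t]/(t^r - s)`. -/
abbrev RootRing (R : Type*) [CommRing R] (r : ℕ) (s : R) : Type _ :=
  R[X] ⧸ Ideal.span {(X : R[X]) ^ r - C s}

/-- The class `t` of the variable in `R' = R[t]/(t^r - s)`. -/
noncomputable abbrev RootRing.t (R : Type*) [CommRing R] (r : ℕ) (s : R) : RootRing R r s :=
  Ideal.Quotient.mk _ X

/-- `Q` is a finitely generated projective module over `R ⧸ I`.  (For a module `Q` killed
by `I`, the `R ⧸ I`-module structure is the induced one and `R`-linear maps between such
modules coincide with `R ⧸ I`-linear maps; being finitely generated projective means being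
a direct summand of a finite free module `(Fin n → R ⧸ I)`.) -/
def IsFgProjOver (R : Type*) [CommRing R] (I : Ideal R)
    (Q : Type*) [AddCommGroup Q] [Module R Q] : Prop :=
  ∃ (n : ℕ) (i : Q →ₗ[R] (Fin n → R ⧸ I)) (p : (Fin n → R ⧸ I) →ₗ[R] Q),
    p.comp i = LinearMap.id

set_option maxHeartbeats 2000000 in
set_option synthInstance.maxHeartbeats 400000 in
/-- Fix a commutative ring `R`, `r ≥ 1`, a nonzerodivisor `s ∈ R`, and
`R' = R[t]/(t^r - s)` with its `ℤ/rℤ`-grading.  Let `M` be a `ℤ/rℤ`-graded `R'`-module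
which is finitely generated and projective as an `R'`-module, and `0 ≤ l < r`.  Then the
degree-zero component of `M / t^l M`, namely `M_0 / (t^l M ∩ M_0)`, is a finitely
generated projective `R/sR`-module. -/
theorem degreeZero_quotient_tpow_isFgProj
    (R : Type*) [CommRing R]
    (r : ℕ) (hr : 1 ≤ r)
    (s : R) (hs : s ∈ nonZeroDivisors R)
    (M : Type*) [AddCommGroup M] [Module (RootRing R r s) M]
    [Module R M] [IsScalarTower R (RootRing R r s) M]
    (Mj : ZMod r → Submodule R M)
    (hinternal : DirectSum.IsInternal Mj)
    (ht_mem : ∀ j : ZMod r, ∀ x ∈ Mj j, RootRing.t R r s • x ∈ Mj (j + 1))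
    [Module.Finite (RootRing R r s) M] [Module.Projective (RootRing R r s) M]
    (l : ℕ) (hl : l < r) :
    IsFgProjOver R (Ideal.span {s})
      (↥(Mj 0) ⧸ (Submodule.comap (Mj 0).subtype
        (Submodule.restrictScalars R
          (Ideal.span {RootRing.t R r s ^ l} • (⊤ : Submodule (RootRing R r s) M))))) := by
  classical
  unfold IsFgProjOver
  rcases subsingleton_or_nontrivial R with hsub | hnt
  · haveI : Subsingleton (RootRing R r s) :=
      subsingleton_of_zero_eq_one (by
        rw [← map_zero (algebraMap R (RootRing R r s)),
          ← map_one (algebraMap R (RootRing R r s)), Subsingleton.elim (0 : R) 1])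
    haveI : Subsingleton M := Module.subsingleton (RootRing R r s) M
    haveI : Subsingleton (↥(Mj 0) ⧸ (Submodule.comap (Mj 0).subtype
        (Submodule.restrictScalars R
          (Ideal.span {RootRing.t R r s ^ l} • (⊤ : Submodule (RootRing R r s) M))))) :=
      ⟨fun a b => by
        obtain ⟨x, rfl⟩ := Submodule.Quotient.mk_surjective _ a
        obtain ⟨y, rfl⟩ := Submodule.Quotient.mk_surjective _ b
        exact congrArg _ (Subsingleton.elim x y)⟩
    exact ⟨0, 0, 0, by ext x; exact Subsingleton.elim _ _⟩
  -- notation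
  set R' := RootRing R r s with hR'def
  set t : R' := RootRing.t R r s with htdef
  set I : Ideal R := Ideal.span {s} with hIdef
  set T : Submodule R M :=
    Submodule.restrictScalars R (Ideal.span {t ^ l} • (⊤ : Submodule R' M)) with hTdef
  set K : Submodule R (Mj 0) := Submodule.comap (Mj 0).subtype T with hKdef
  -- basic ring facts
  have hmon : ((X : R[X]) ^ r - C s).Monic := monic_X_pow_sub_C s (by omega)
  have hts : t ^ r = algebraMap R R' s := by
    have h0 : Ideal.Quotient.mk (Ideal.span {(X : R[X]) ^ r - C s}) ((X : R[X]) ^ r - C s) = 0 :=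
      Ideal.Quotient.eq_zero_iff_mem.mpr (Ideal.subset_span rfl)
    rw [map_sub, map_pow] at h0
    have := sub_eq_zero.mp h0
    exact this
  -- the power basis of R' over R
  have hdim : (AdjoinRoot.powerBasis' hmon).dim = r := by
    rw [AdjoinRoot.powerBasis'_dim, natDegree_X_pow_sub_C]
  let b : Module.Basis (Fin r) R R' := (AdjoinRoot.powerBasis' hmon).basis.reindex (finCongr hdim)
  have hb : ∀ k : Fin r, b k = t ^ (k : ℕ) := by
    intro k
    show ((AdjoinRoot.powerBasis' hmon).basis.reindex (finCongr hdim)) k = t ^ (k : ℕ)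
    rw [Module.Basis.reindex_apply, PowerBasis.coe_basis, AdjoinRoot.powerBasis'_gen]
    rfl
  -- the splitting of M over R'
  obtain ⟨n, p, i, -, -, hpi⟩ :=
    Module.Finite.exists_comp_eq_id_of_projective R' M
  -- the grading projection
  let e : (DirectSum (ZMod r) fun j => ↥(Mj j)) ≃ₗ[R] M :=
    LinearEquiv.ofBijective (DirectSum.coeLinearMap Mj) hinternal
  let π0 : M →ₗ[R] Mj 0 :=
    (DirectSum.component R (ZMod r) (fun j => ↥(Mj j)) 0) ∘ₗ e.symm.toLinearMap
  have hπ0_apply : ∀ x : M, π0 x = e.symm x 0 := fun x => rfl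
  have hπ0_mem : ∀ (x : M) (hx : x ∈ Mj 0), π0 x = ⟨x, hx⟩ := by
    intro x hx
    rw [hπ0_apply]
    exact hinternal.ofBijective_coeLinearMap_of_mem hx
  have hπ0_ne : ∀ (j : ZMod r) (x : M), x ∈ Mj j → j ≠ 0 → π0 x = 0 := by
    intro j x hx hj
    rw [hπ0_apply]
    exact hinternal.ofBijective_coeLinearMap_of_mem_ne hj hx
  -- powers of t move the grading
  have hpow : ∀ (k : ℕ) (j : ZMod r), ∀ x ∈ Mj j, (t ^ k) • x ∈ Mj (j + (k : ZMod r)) := by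
    intro k
    induction k with
    | zero => intro j x hx; simpa using hx
    | succ k ih =>
        intro j x hx
        have h1 : t • ((t ^ k) • x) ∈ Mj (j + (k : ZMod r) + 1) :=
          ht_mem _ _ (ih j x hx)
        have h2 : (t ^ (k + 1)) • x = t • ((t ^ k) • x) := by
          rw [pow_succ', mul_smul]
        rw [h2]
        convert h1 using 2
        push_cast
        ring
  -- T is a graded submodule: π0 maps T to T (via the subtype)
  have hπ0T : ∀ x ∈ T, ((π0 x : M)) ∈ T := by
    have key : ∀ m : M, ((π0 ((t ^ l) • m) : M)) ∈ T := by
      let killer : M →ₗ[R] M ⧸ T := T.mkQ ∘ₗ (Mj 0).subtype ∘ₗ π0 ∘ₗ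
            ((LinearMap.lsmul R' M (t ^ l)).restrictScalars R)
      have hStop : ∀ (j : ZMod r), Mj j ≤ LinearMap.ker killer := by
        intro j x hx
        simp only [killer, LinearMap.mem_ker, LinearMap.comp_apply,
          LinearMap.coe_restrictScalars,
          LinearMap.lsmul_apply, Submodule.mkQ_apply, Submodule.Quotient.mk_eq_zero]
        have hmem : (t ^ l) • x ∈ Mj (j + (l : ZMod r)) := hpow l j x hx
        by_cases hj : j + (l : ZMod r) = 0
        · rw [hj] at hmem
          rw [hπ0_mem _ hmem]
          exact (Submodule.smul_mem_smul (Ideal.subset_span rfl) trivial :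
            (t ^ l) • x ∈ Ideal.span {t ^ l} • (⊤ : Submodule R' M))
        · rw [hπ0_ne _ _ hmem hj]
          simp
      intro m
      have htop : (⊤ : Submodule R M) ≤ LinearMap.ker killer := by
        rw [← hinternal.submodule_iSup_eq_top]
        exact iSup_le hStop
      have hm : m ∈ LinearMap.ker killer := htop trivial
      simpa only [killer, LinearMap.mem_ker, LinearMap.comp_apply, Submodule.subtype_apply,
        LinearMap.coe_restrictScalars,
        LinearMap.lsmul_apply, Submodule.mkQ_apply, Submodule.Quotient.mk_eq_zero] using hm
    intro x hx
    have hx' : x ∈ Ideal.span {t ^ l} • (⊤ : Submodule R' M) := hx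
    refine Submodule.smul_induction_on hx' ?_ ?_
    · intro a ha m _
      obtain ⟨c, rfl⟩ := Ideal.mem_span_singleton'.mp ha
      rw [mul_comm, mul_smul]
      exact key (c • m)
    · intro x y hx hy
      rw [map_add]
      exact T.add_mem hx hy
  -- maps between quotients for the grading
  let ιQ : ((Mj 0) ⧸ K) →ₗ[R] (M ⧸ T) :=
    Submodule.mapQ K T (Mj 0).subtype (fun x hx => hx)
  let πQ : (M ⧸ T) →ₗ[R] ((Mj 0) ⧸ K) :=
    Submodule.mapQ T K π0 (fun x hx => hπ0T x hx)
  have hπι : ∀ q, πQ (ιQ q) = q := by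
    intro q
    obtain ⟨y, rfl⟩ := Submodule.Quotient.mk_surjective K q
    unfold πQ ιQ
    rw [show (Submodule.Quotient.mk y : (Mj 0) ⧸ K) = K.mkQ y from rfl]
    show (Submodule.Quotient.mk (π0 ((Mj 0).subtype y)) : (Mj 0) ⧸ K) = Submodule.Quotient.mk y
    congr 1
    rw [Submodule.subtype_apply, hπ0_mem _ y.2]
  -- quotients of the free module
  set TF : Submodule R (Fin n → R') :=
    Submodule.restrictScalars R (Ideal.span {t ^ l} • (⊤ : Submodule R' (Fin n → R'))) with hTFdef
  have hicond : ∀ (x : M), x ∈ Ideal.span {t ^ l} • (⊤ : Submodule R' M) →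
        i x ∈ Ideal.span {t ^ l} • (⊤ : Submodule R' (Fin n → R')) := by
    intro x hx
    have h1 : i x ∈ Submodule.map i (Ideal.span {t ^ l} • (⊤ : Submodule R' M)) :=
      Submodule.mem_map_of_mem hx
    rw [Submodule.map_smul''] at h1
    exact Submodule.smul_mono le_rfl le_top h1
  have hpcond : ∀ (x : Fin n → R'),
      x ∈ Ideal.span {t ^ l} • (⊤ : Submodule R' (Fin n → R')) →
        p x ∈ Ideal.span {t ^ l} • (⊤ : Submodule R' M) := by
    intro x hx
    have h1 : p x ∈ Submodule.map p (Ideal.span {t ^ l} • (⊤ : Submodule R' (Fin n → R'))) :=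
      Submodule.mem_map_of_mem hx
    rw [Submodule.map_smul''] at h1
    exact Submodule.smul_mono le_rfl le_top h1
  let ibar : (M ⧸ T) →ₗ[R] ((Fin n → R') ⧸ TF) :=
    Submodule.mapQ T TF (i.restrictScalars R) (fun x hx => hicond x hx)
  let pbar : ((Fin n → R') ⧸ TF) →ₗ[R] (M ⧸ T) :=
    Submodule.mapQ TF T (p.restrictScalars R) (fun x hx => hpcond x hx)
  have hpibar : ∀ x, pbar (ibar x) = x := by
    intro x
    obtain ⟨x, rfl⟩ := Submodule.Quotient.mk_surjective T x
    unfold pbar ibar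
    rw [show (Submodule.Quotient.mk x : M ⧸ T) = T.mkQ x from rfl]
    show (Submodule.Quotient.mk (p (i x)) : M ⧸ T) = Submodule.Quotient.mk x
    congr 1
    have := LinearMap.congr_fun hpi x
    simpa using this
  -- the coefficient maps
  have hcoef : ∀ (jj : Fin r), ((jj : ℕ) < l) → ∀ z : R',
      I.mkQ (b.repr (t ^ l * z) jj) = 0 := by
    intro jj hjj
    suffices h : (I.mkQ ∘ₗ (Finsupp.lapply jj : (Fin r →₀ R) →ₗ[R] R) ∘ₗ b.repr.toLinearMap
        ∘ₗ LinearMap.mulLeft R (t ^ l)) = 0 by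
      intro z
      have := LinearMap.congr_fun h z
      simpa using this
    apply b.ext
    intro k
    simp only [LinearMap.comp_apply, LinearMap.mulLeft_apply, LinearMap.zero_apply,
      LinearEquiv.coe_coe, Finsupp.lapply_apply, Submodule.mkQ_apply]
    rw [hb k, ← pow_add, Submodule.Quotient.mk_eq_zero]
    rcases lt_or_ge (l + (k : ℕ)) r with hlt | hge
    · rw [show (t ^ (l + (k : ℕ))) = b ⟨l + (k : ℕ), hlt⟩ from by rw [hb],
        Module.Basis.repr_self, Finsupp.single_apply]
      rw [if_neg (by simp only [Fin.ext_iff]; omega)]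
      exact I.zero_mem
    · have hmlt : l + (k : ℕ) - r < r := by omega
      have hsplit : (l + (k : ℕ)) = (l + (k : ℕ) - r) + r := by omega
      rw [hsplit, pow_add, hts, mul_comm, ← Algebra.smul_def, map_smul, Finsupp.smul_apply,
        smul_eq_mul]
      exact Ideal.mul_mem_right _ _ (Ideal.subset_span rfl)
  -- the map α
  let coordmap : Fin n → Fin l → ((Fin n → R') →ₗ[R] R ⧸ I) := fun k j =>
    I.mkQ ∘ₗ (Finsupp.lapply (Fin.castLE hl.le j) : (Fin r →₀ R) →ₗ[R] R)
      ∘ₗ b.repr.toLinearMap ∘ₗ LinearMap.proj k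
  let α₀ : (Fin n → R') →ₗ[R] (Fin (n * l) → R ⧸ I) :=
    LinearMap.pi (fun q => coordmap (finProdFinEquiv.symm q).1 (finProdFinEquiv.symm q).2)
  have hα₀smul : ∀ w : Fin n → R', α₀ ((t ^ l) • w) = 0 := by
    intro w
    funext q
    simp only [α₀, coordmap, LinearMap.pi_apply, LinearMap.comp_apply, LinearMap.proj_apply,
      LinearEquiv.coe_coe, Finsupp.lapply_apply, Pi.smul_apply, smul_eq_mul, Pi.zero_apply]
    exact hcoef _ (by simpa using (finProdFinEquiv.symm q).2.isLt) _
  have hα₀ker : TF ≤ LinearMap.ker α₀ := by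
    intro x hx
    rw [LinearMap.mem_ker]
    have hx' : x ∈ Ideal.span {t ^ l} • (⊤ : Submodule R' (Fin n → R')) := hx
    refine Submodule.smul_induction_on hx' ?_ ?_
    · intro a ha m _
      obtain ⟨c, rfl⟩ := Ideal.mem_span_singleton'.mp ha
      rw [mul_comm c (t ^ l), mul_smul]
      exact hα₀smul (c • m)
    · intro x y hx hy
      rw [map_add, hx, hy, add_zero]
  let αq : ((Fin n → R') ⧸ TF) →ₗ[R] (Fin (n * l) → R ⧸ I) := Submodule.liftQ TF α₀ hα₀ker
  -- the map β
  have hsingle_mem : ∀ (k : Fin n) (j : ℕ), j < l →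
      (algebraMap R R' s) • Pi.single (M := fun _ => R') k (t ^ j) ∈
        Ideal.span {t ^ l} • (⊤ : Submodule R' (Fin n → R')) := by
    intro k j hj
    have h1 : (algebraMap R R' s) • (t ^ j : R') = (t ^ l) • (t ^ (r - l + j) : R') := by
      rw [smul_eq_mul, smul_eq_mul, ← hts, ← pow_add, ← pow_add]
      congr 1
      omega
    have h2 : (algebraMap R R' s) • Pi.single (M := fun _ => R') k (t ^ j)
        = (t ^ l) • Pi.single (M := fun _ => R') k (t ^ (r - l + j)) := by
      funext x
      rcases eq_or_ne x k with rfl | hx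
      · simp only [Pi.smul_apply, Pi.single_eq_same, h1]
      · simp only [Pi.smul_apply, Pi.single_eq_of_ne hx, smul_zero]
    rw [h2]
    exact Submodule.smul_mem_smul (Ideal.subset_span rfl) trivial
  let βmap : Fin n → Fin l → ((R ⧸ I) →ₗ[R] ((Fin n → R') ⧸ TF)) := fun k j =>
    Submodule.liftQ I
      (TF.mkQ ∘ₗ LinearMap.toSpanSingleton R (Fin n → R') (Pi.single k (t ^ (j : ℕ))))
      (by
        intro c hc
        obtain ⟨d, rfl⟩ := Ideal.mem_span_singleton'.mp hc
        simp only [LinearMap.mem_ker, LinearMap.comp_apply, LinearMap.toSpanSingleton_apply,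
          Submodule.mkQ_apply, Submodule.Quotient.mk_eq_zero]
        rw [← algebraMap_smul R' (d * s), map_mul, mul_smul]
        exact (Ideal.span {t ^ l} • (⊤ : Submodule R' (Fin n → R'))).smul_mem _
          (hsingle_mem k j j.isLt))
  let βq : (Fin (n * l) → R ⧸ I) →ₗ[R] ((Fin n → R') ⧸ TF) :=
    ∑ k : Fin n, ∑ j : Fin l, (βmap k j) ∘ₗ LinearMap.proj (finProdFinEquiv (k, j))
  -- β ∘ α = id
  have hα₀val : ∀ (x : Fin n → R') (k : Fin n) (j : Fin l),
      α₀ x (finProdFinEquiv (k, j)) = coordmap k j x := by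
    intro x k j
    simp only [α₀, LinearMap.pi_apply]
    rw [Equiv.symm_apply_apply]
  have hsum : ∀ w : Fin (n * l) → R ⧸ I,
      βq w = ∑ k : Fin n, ∑ j : Fin l, βmap k j (w (finProdFinEquiv (k, j))) := by
    intro w
    simp [βq, LinearMap.sum_apply, LinearMap.comp_apply, LinearMap.proj_apply]
  have hβα : ∀ v : ((Fin n → R') ⧸ TF), βq (αq v) = v := by
    have hcomp : (βq ∘ₗ αq) ∘ₗ TF.mkQ = TF.mkQ := by
      apply (Pi.basis fun _ : Fin n => b).ext
      rintro ⟨k0, j0⟩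
      rw [Pi.basis_apply]
      have h1 : αq (TF.mkQ (Pi.single k0 (b j0))) = α₀ (Pi.single k0 (b j0)) := by
        rw [Submodule.mkQ_apply, Submodule.liftQ_apply]
      rw [LinearMap.comp_apply, LinearMap.comp_apply, h1]
      have hcoord : ∀ (k : Fin n) (j : Fin l), coordmap k j (Pi.single k0 (b j0)) =
          if k = k0 ∧ j0 = Fin.castLE hl.le j then I.mkQ 1 else 0 := by
        intro k j
        simp only [coordmap, LinearMap.comp_apply, LinearMap.proj_apply, LinearEquiv.coe_coe,
          Finsupp.lapply_apply]
        by_cases hk : k = k0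
        · subst hk
          rw [Pi.single_eq_same, Module.Basis.repr_self, Finsupp.single_apply]
          by_cases hj : j0 = Fin.castLE hl.le j
          · rw [if_pos hj, if_pos ⟨rfl, hj⟩]
          · rw [if_neg hj, if_neg (by tauto), map_zero]
        · rw [Pi.single_eq_of_ne hk, map_zero, Finsupp.zero_apply, map_zero,
            if_neg (by tauto)]
      have hterm : ∀ (k : Fin n) (j : Fin l),
          βmap k j (α₀ (Pi.single k0 (b j0)) (finProdFinEquiv (k, j))) =
          if k = k0 ∧ j0 = Fin.castLE hl.le j
            then TF.mkQ (Pi.single k0 ((t : R') ^ (j : ℕ))) else 0 := by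
        intro k j
        rw [hα₀val, hcoord]
        by_cases h : k = k0 ∧ j0 = Fin.castLE hl.le j
        · rw [if_pos h, if_pos h]
          obtain ⟨rfl, hj⟩ := h
          show βmap k j (Submodule.Quotient.mk 1) = _
          simp only [βmap]
          rw [Submodule.liftQ_apply]
          simp only [LinearMap.comp_apply, LinearMap.toSpanSingleton_apply, one_smul]
        · rw [if_neg h, if_neg h, map_zero]
      rw [hsum]
      simp only [hterm]
      rcases lt_or_ge (j0 : ℕ) l with hjl | hjl
      · have hcond : ∀ j : Fin l, (j0 = Fin.castLE hl.le j) = ((⟨(j0 : ℕ), hjl⟩ : Fin l) = j) := by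
          intro j
          simp [Fin.ext_iff]
        have hconst : ∀ (k : Fin n) (j : Fin l),
            (if k = k0 ∧ j0 = Fin.castLE hl.le j
              then TF.mkQ (Pi.single k0 ((t : R') ^ (j : ℕ))) else 0)
            = if k = k0 then (if (⟨(j0 : ℕ), hjl⟩ : Fin l) = j
              then TF.mkQ (Pi.single k0 (b j0)) else 0) else 0 := by
          intro k j
          rw [ite_and]
          by_cases hk : k = k0
          · rw [if_pos hk, if_pos hk]
            by_cases hj : j0 = Fin.castLE hl.le j
            · rw [if_pos hj, if_pos ((hcond j) ▸ hj), hb j0]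
              congr 2
              have : (j0 : ℕ) = ((j : ℕ)) := by rw [hj]; simp
              rw [this]
            · rw [if_neg hj, if_neg (fun hh => hj ((hcond j) ▸ hh))]
          · rw [if_neg hk, if_neg hk]
        simp only [hconst]
        have hinner : ∀ k : Fin n,
            (∑ j : Fin l, if k = k0 then (if (⟨(j0 : ℕ), hjl⟩ : Fin l) = j
              then TF.mkQ (Pi.single k0 (b j0)) else 0) else 0)
            = if k = k0 then TF.mkQ (Pi.single k0 (b j0)) else 0 := by
          intro k
          by_cases hk : k = k0
          · simp only [if_pos hk]
            rw [Finset.sum_ite_eq Finset.univ (⟨(j0 : ℕ), hjl⟩ : Fin l)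
              (fun _ => TF.mkQ (Pi.single k0 (b j0)))]
            rw [if_pos (Finset.mem_univ _)]
          · simp only [if_neg hk, Finset.sum_const_zero]
        simp only [hinner]
        rw [Finset.sum_ite_eq' Finset.univ k0 (fun _ => TF.mkQ (Pi.single k0 (b j0)))]
        rw [if_pos (Finset.mem_univ _)]
      · have hfalse : ∀ (k : Fin n) (j : Fin l), ¬(k = k0 ∧ j0 = Fin.castLE hl.le j) := by
          intro k j hh
          have : (j0 : ℕ) = ((j : ℕ)) := by rw [hh.2]; simp
          omega
        have hzero : ∀ (k : Fin n) (j : Fin l),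
            (if k = k0 ∧ j0 = Fin.castLE hl.le j
              then TF.mkQ (Pi.single k0 ((t : R') ^ (j : ℕ))) else 0) = 0 :=
          fun k j => if_neg (hfalse k j)
        simp only [hzero, Finset.sum_const_zero]
        symm
        rw [Submodule.mkQ_apply, Submodule.Quotient.mk_eq_zero]
        have hsplit : (b j0 : R') = (t ^ l) • (t ^ ((j0 : ℕ) - l) : R') := by
          rw [hb j0, smul_eq_mul, ← pow_add]
          congr 1
          omega
        have h2 : Pi.single (M := fun _ => R') k0 ((t ^ l) • (t ^ ((j0 : ℕ) - l) : R'))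
            = (t ^ l) • Pi.single (M := fun _ => R') k0 (t ^ ((j0 : ℕ) - l)) := by
          funext x
          rcases eq_or_ne x k0 with rfl | hx
          · simp only [Pi.smul_apply, Pi.single_eq_same]
          · simp only [Pi.smul_apply, Pi.single_eq_of_ne hx, smul_zero]
        rw [hsplit, h2]
        exact (Submodule.smul_mem_smul (Ideal.subset_span rfl) trivial :
          (t ^ l) • Pi.single (M := fun _ => R') k0 (t ^ ((j0 : ℕ) - l)) ∈
            Ideal.span {t ^ l} • (⊤ : Submodule R' (Fin n → R')))
    intro v
    obtain ⟨x, rfl⟩ := Submodule.Quotient.mk_surjective TF v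
    have := LinearMap.congr_fun hcomp x
    simpa using this
  -- assemble
  refine ⟨n * l, αq ∘ₗ ibar ∘ₗ ιQ, πQ ∘ₗ pbar ∘ₗ βq, ?_⟩
  apply LinearMap.ext
  intro q
  simp only [LinearMap.comp_apply, LinearMap.id_apply]
  rw [hβα, hpibar, hπι]
end

section
/- Fix a commutative local ring R with maximal ideal m, an integer r ≥ 1, and an element s ∈ m which is a nonzerodivisor in R; set R' = R[t]/(t^r − s) with its ℤ/rℤ-grading. Then every ℤ/rℤ-graded R'-module which is free of rank 1 as an R'-module is isomorphic, as a graded R'-module, to the shift R'(j) for exactly one j ∈ ℤ/rℤ; in particular, the set of isomorphism classes of such graded modules is in bijection with ℤ/rℤ. -/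
open Polynomial

/-- The `ℤ/rℤ`-grading of `R' = R[t]/(t^r - s)`: the degree-`j` component is `R·t^j`. -/
noncomputable def RootRing.grading (R : Type*) [CommRing R] (r : ℕ) (s : R) (j : ZMod r) :
    Submodule R (RootRing R r s) :=
  Submodule.span R {RootRing.t R r s ^ j.val}

section DirectSumAux

variable {ι : Type*} [DecidableEq ι] [Fintype ι] {S N : Type*} [Ring S] [AddCommGroup N]
  [Module S N] (A : ι → Submodule S N)

lemma isInternal_exists_sum (h : DirectSum.IsInternal A) (x : N) :
    ∃ c : ι → N, (∀ i, c i ∈ A i) ∧ ∑ i, c i = x := by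
  obtain ⟨d, hd⟩ := h.surjective x
  refine ⟨fun i => (d i : N), fun i => (d i).2, ?_⟩
  rw [← hd]
  conv_rhs => rw [← DirectSum.sum_univ_of d]
  rw [map_sum]
  exact Finset.sum_congr rfl fun i _ => (DirectSum.coeAddMonoidHom_of A i (d i)).symm

lemma isInternal_sum_eq_zero (h : DirectSum.IsInternal A) (c : ι → N)
    (hc : ∀ i, c i ∈ A i) (h0 : ∑ i, c i = 0) : ∀ i, c i = 0 := by
  intro i
  classical
  set d : DirectSum ι (fun i => ↥(A i)) := ∑ i, DirectSum.of (fun i => A i) i ⟨c i, hc i⟩ with hd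
  have hcoe : DirectSum.coeAddMonoidHom A d = 0 := by
    rw [hd, map_sum]
    rw [show ∑ i, DirectSum.coeAddMonoidHom A (DirectSum.of (fun i => ↥(A i)) i ⟨c i, hc i⟩)
        = ∑ i, c i from Finset.sum_congr rfl fun i _ => DirectSum.coeAddMonoidHom_of A i _]
    exact h0
  have hd0 : d = 0 := h.injective (by rw [hcoe, map_zero])
  have hdi : d i = ⟨c i, hc i⟩ := by
    rw [hd, DFinsupp.finset_sum_apply]
    rw [Finset.sum_eq_single i]
    · exact DirectSum.of_eq_same i _
    · intro j _ hj; exact DirectSum.of_eq_of_ne _ _ _ hj.symm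
    · intro hi; exact absurd (Finset.mem_univ i) hi
  rw [hd0] at hdi
  exact (Subtype.ext_iff.mp hdi.symm)

end DirectSumAux

/-- Multiplication by a unit as a linear automorphism. -/
noncomputable def unitMulEquiv {A : Type*} [CommRing A] (u : Aˣ) : A ≃ₗ[A] A where
  toFun x := x * u
  map_add' x y := by ring
  map_smul' a x := by simp [smul_eq_mul]; ring
  invFun x := x * ↑u⁻¹
  left_inv x := by simp [mul_assoc]
  right_inv x := by simp [mul_assoc]

section Aux
set_option linter.unusedSectionVars false
set_option maxHeartbeats 1000000
set_option synthInstance.maxHeartbeats 200000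
variable {R : Type*} [CommRing R] [Nontrivial R] {r : ℕ} [NeZero r] {s : R}

noncomputable def rootPB (R : Type*) [CommRing R] [Nontrivial R] (r : ℕ) [NeZero r] (s : R) :
    PowerBasis R (RootRing R r s) :=
  AdjoinRoot.powerBasis' (monic_X_pow_sub_C s (NeZero.ne r))

lemma rootPB_dim : (rootPB R r s).dim = r := natDegree_X_pow_sub_C

lemma rootPB_gen : (rootPB R r s).gen = RootRing.t R r s := rfl

lemma t_pow_r : (RootRing.t R r s) ^ r = algebraMap R (RootRing R r s) s := by
  have h : (Ideal.Quotient.mk (Ideal.span {(X : R[X]) ^ r - C s})) ((X : R[X]) ^ r - C s) = 0 :=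
    Ideal.Quotient.eq_zero_iff_mem.mpr (Ideal.subset_span rfl)
  rw [map_sub, map_pow, sub_eq_zero] at h
  rw [RootRing.t, h]; rfl

/-- every element decomposes in the monomial "basis" indexed by `ZMod r`. -/
lemma rootRing_decomp (y : RootRing R r s) :
    ∃ a : ZMod r → R, y = ∑ k : ZMod r, a k • (RootRing.t R r s) ^ k.val := by
  set pb := rootPB R r s with hpb
  have hdim : pb.dim = r := rootPB_dim
  let φ : Fin pb.dim ≃ ZMod r :=
    { toFun := fun v => ((v : ℕ) : ZMod r)
      invFun := fun k => ⟨k.val, lt_of_lt_of_eq k.val_lt hdim.symm⟩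
      left_inv := fun v => by
        have hv : (v : ℕ) < r := lt_of_lt_of_eq v.isLt hdim
        ext
        simp only []
        exact ZMod.val_cast_of_lt hv
      right_inv := fun k => by exact ZMod.natCast_rightInverse k }
  refine ⟨fun k => pb.basis.repr y (φ.symm k), ?_⟩
  conv_lhs => rw [← pb.basis.sum_repr y]
  rw [← Equiv.sum_comp φ (fun k => pb.basis.repr y (φ.symm k) • (RootRing.t R r s) ^ k.val)]
  refine Finset.sum_congr rfl fun v _ => ?_
  rw [Equiv.symm_apply_apply, PowerBasis.coe_basis, rootPB_gen]
  have hv : ((φ v).val) = (v : ℕ) := ZMod.val_cast_of_lt (lt_of_lt_of_eq v.isLt hdim)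
  rw [hv]

/-- The candidate maximal ideal of `R'`. -/
noncomputable def rootIdeal (R : Type*) [CommRing R] [IsLocalRing R] (r : ℕ) (s : R) :
    Ideal (RootRing R r s) :=
  Ideal.span {RootRing.t R r s} ⊔
    Ideal.map (algebraMap R (RootRing R r s)) (IsLocalRing.maximalIdeal R)

variable [IsLocalRing R]

lemma one_notMem_rootIdeal (hsm : s ∈ IsLocalRing.maximalIdeal R) :
    (1 : RootRing R r s) ∉ rootIdeal R r s := by
  set m := IsLocalRing.maximalIdeal R
  let ψ₀ : R[X] →+* R ⧸ m := Polynomial.eval₂RingHom (Ideal.Quotient.mk m) 0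
  have hg : ψ₀ ((X : R[X]) ^ r - C s) = 0 := by
    simp [ψ₀, zero_pow (NeZero.ne r), Ideal.Quotient.eq_zero_iff_mem.mpr hsm]
  have hker : ∀ p ∈ Ideal.span {(X : R[X]) ^ r - C s}, ψ₀ p = 0 := by
    intro p hp
    have : Ideal.span {(X : R[X]) ^ r - C s} ≤ RingHom.ker ψ₀ := by
      rw [Ideal.span_le]; intro q hq; rw [Set.mem_singleton_iff] at hq
      simpa [RingHom.mem_ker, hq] using hg
    exact this hp
  let ψ : RootRing R r s →+* R ⧸ m := Ideal.Quotient.lift _ ψ₀ hker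
  have hψt : ψ (RootRing.t R r s) = 0 := by simp [ψ, ψ₀, RootRing.t]
  have hψa : ∀ a : R, ψ (algebraMap R (RootRing R r s) a) = Ideal.Quotient.mk m a := by
    intro a
    show ψ₀ (C a) = _
    simp [ψ₀]
  intro h1
  haveI : Nontrivial (R ⧸ m) :=
    Ideal.Quotient.nontrivial_iff.mpr (Ideal.IsMaximal.ne_top (IsLocalRing.maximalIdeal.isMaximal R))
  obtain ⟨p, hp, q, hq, hpq⟩ := Submodule.mem_sup.mp h1
  obtain ⟨d, hd⟩ := Ideal.mem_span_singleton'.mp hp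
  have hψq : ψ q = 0 := by
    have hle : Ideal.map (algebraMap R (RootRing R r s)) m ≤ RingHom.ker ψ := by
      rw [Ideal.map_le_iff_le_comap]
      intro a ha
      simp [Ideal.mem_comap, RingHom.mem_ker, hψa a, Ideal.Quotient.eq_zero_iff_mem.mpr ha]
    exact hle hq
  have : (1 : R ⧸ m) = 0 := by
    rw [← map_one ψ, ← hpq, map_add, ← hd, map_mul, hψt, mul_zero, zero_add, hψq]
  exact one_ne_zero this

lemma map_maximalIdeal_le_jacobson :
    Ideal.map (algebraMap R (RootRing R r s)) (IsLocalRing.maximalIdeal R) ≤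
      Ideal.jacobson (⊥ : Ideal (RootRing R r s)) := by
  haveI : Module.Finite R (RootRing R r s) := Module.Finite.of_basis (rootPB R r s).basis
  rw [Ideal.jacobson]
  refine le_sInf ?_
  rintro J ⟨-, hJ⟩
  rw [Ideal.map_le_iff_le_comap]
  haveI := hJ
  have hc : (J.comap (algebraMap R (RootRing R r s))).IsMaximal :=
    Ideal.isMaximal_comap_of_isIntegral_of_isMaximal J
  rw [IsLocalRing.eq_maximalIdeal hc]

lemma isUnit_one_add_of_mem_map {w : RootRing R r s}
    (hw : w ∈ Ideal.map (algebraMap R (RootRing R r s)) (IsLocalRing.maximalIdeal R)) :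
    IsUnit (1 + w) := by
  have h := Ideal.mem_jacobson_bot.mp (map_maximalIdeal_le_jacobson hw) 1
  rwa [mul_one, add_comm] at h

lemma isUnit_one_add_of_mem_rootIdeal (hsm : s ∈ IsLocalRing.maximalIdeal R)
    {z : RootRing R r s} (hz : z ∈ rootIdeal R r s) : IsUnit (1 + z) := by
  set m := IsLocalRing.maximalIdeal R
  set mm := Ideal.map (algebraMap R (RootRing R r s)) m with hmm
  obtain ⟨p, hp, q, hq, hpq⟩ := Submodule.mem_sup.mp hz
  obtain ⟨d, hd⟩ := Ideal.mem_span_singleton'.mp hp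
  set mkQ := Ideal.Quotient.mk mm
  have htn : IsNilpotent (mkQ (RootRing.t R r s)) :=
    ⟨r, by
      rw [← map_pow, t_pow_r]
      exact Ideal.Quotient.eq_zero_iff_mem.mpr (Ideal.mem_map_of_mem _ hsm)⟩
  have hzn : IsNilpotent (mkQ z) := by
    rw [← hpq, map_add, Ideal.Quotient.eq_zero_iff_mem.mpr hq, add_zero, ← hd, map_mul]
    exact (Commute.all (mkQ d) (mkQ (RootRing.t R r s))).isNilpotent_mul_left htn
  have hu : IsUnit (mkQ (1 + z)) := by
    rw [map_add, map_one, add_comm]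
    exact hzn.isUnit_add_one
  obtain ⟨v, hv⟩ : ∃ b, mkQ (1 + z) * b = 1 := ⟨↑hu.unit⁻¹, hu.mul_val_inv⟩
  obtain ⟨y, rfl⟩ := Ideal.Quotient.mk_surjective v
  have hw : (1 + z) * y - 1 ∈ mm := by
    have h0 : mkQ ((1 + z) * y - 1) = 0 := by
      rw [map_sub, map_mul, map_one, hv, sub_self]
    exact Ideal.Quotient.eq_zero_iff_mem.mp h0
  have h1 : IsUnit ((1 + z) * y) := by
    have := isUnit_one_add_of_mem_map hw
    rwa [add_sub_cancel] at this
  exact isUnit_of_mul_isUnit_left h1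

lemma isUnit_of_notMem_rootIdeal (hsm : s ∈ IsLocalRing.maximalIdeal R)
    {x : RootRing R r s} (hx : x ∉ rootIdeal R r s) : IsUnit x := by
  obtain ⟨a, ha⟩ := rootRing_decomp x
  set t := RootRing.t R r s
  have hterm : ∀ k : ZMod r, k ≠ 0 → a k • t ^ k.val ∈ Ideal.span {t} := by
    intro k hk
    have hkv : k.val ≠ 0 := fun h => hk ((ZMod.val_eq_zero k).mp h)
    obtain ⟨v, hv⟩ := Nat.exists_eq_succ_of_ne_zero hkv
    rw [hv, pow_succ, ← smul_mul_assoc]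
    exact Ideal.mem_span_singleton'.mpr ⟨a k • t ^ v, rfl⟩
  have hsplit : x = a 0 • (1 : RootRing R r s) + ∑ k ∈ Finset.univ.erase 0, a k • t ^ k.val := by
    rw [ha, ← Finset.add_sum_erase Finset.univ _ (Finset.mem_univ 0)]
    congr 1
    rw [ZMod.val_zero, pow_zero]
  have hz : x - algebraMap R (RootRing R r s) (a 0) ∈ Ideal.span {t} := by
    rw [Algebra.algebraMap_eq_smul_one, hsplit, add_sub_cancel_left]
    exact Submodule.sum_mem _ fun k hk => hterm k (Finset.ne_of_mem_erase hk)
  have ha0 : IsUnit (a 0) := by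
    by_contra h
    apply hx
    have hmem : algebraMap R (RootRing R r s) (a 0) ∈ rootIdeal R r s :=
      Ideal.mem_sup_right (Ideal.mem_map_of_mem _ ((IsLocalRing.mem_maximalIdeal _).mpr h))
    rw [← sub_add_cancel x (algebraMap R (RootRing R r s) (a 0))]
    exact Ideal.add_mem _ (Ideal.mem_sup_left hz) hmem
  obtain ⟨u, hu⟩ := ha0.map (algebraMap R (RootRing R r s))
  have hz' : (↑u⁻¹ : RootRing R r s) * (x - algebraMap R (RootRing R r s) (a 0)) ∈
      rootIdeal R r s := Ideal.mul_mem_left _ _ (Ideal.mem_sup_left hz)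
  have h1 := isUnit_one_add_of_mem_rootIdeal hsm hz'
  have hx2 : x = ↑u * (1 + ↑u⁻¹ * (x - algebraMap R (RootRing R r s) (a 0))) := by
    rw [mul_add, mul_one, ← mul_assoc, Units.mul_inv, one_mul, hu, add_sub_cancel]
  rw [hx2]
  exact u.isUnit.mul h1

end Aux


set_option maxHeartbeats 1000000 in
set_option synthInstance.maxHeartbeats 200000 in
/-- Let `R` be a commutative local ring with maximal ideal `m`, `r ≥ 1`, `s ∈ m` a
nonzerodivisor, and `R' = R[t]/(t^r - s)` with its `ℤ/rℤ`-grading.  Every `ℤ/rℤ`-graded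
`R'`-module which is free of rank `1` as an `R'`-module is isomorphic, as a graded
module, to the shift `R'(j)` (whose degree-`i` component is `R'_{i+j}`) for exactly one
`j : ℤ/rℤ`. -/
theorem graded_rank_one_iso_shift
    (R : Type*) [CommRing R] [IsLocalRing R]
    (r : ℕ) (hr : 1 ≤ r)
    (s : R) (hsm : s ∈ IsLocalRing.maximalIdeal R) (hs : s ∈ nonZeroDivisors R)
    (M : Type*) [AddCommGroup M] [Module (RootRing R r s) M]
    [Module R M] [IsScalarTower R (RootRing R r s) M]
    (Mj : ZMod r → Submodule R M)
    (hinternal : DirectSum.IsInternal Mj)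
    (ht_mem : ∀ j : ZMod r, ∀ x ∈ Mj j, RootRing.t R r s • x ∈ Mj (j + 1))
    -- `M` is free of rank one as an `R'`-module
    (hfree : Nonempty (M ≃ₗ[RootRing R r s] RootRing R r s)) :
    ∃! j : ZMod r, ∃ e : M ≃ₗ[RootRing R r s] RootRing R r s,
      (∀ i : ZMod r, ∀ x ∈ Mj i, e x ∈ RootRing.grading R r s (i + j)) ∧
      (∀ i : ZMod r, ∀ y ∈ RootRing.grading R r s (i + j), e.symm y ∈ Mj i) := by
  haveI : NeZero r := ⟨by omega⟩
  classical
  obtain ⟨e₀⟩ := hfree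
  set R' := RootRing R r s with hR'
  set t := RootRing.t R r s with htdef
  -- smul compatibility
  have smul_e₀symm : ∀ (a : R) (z : R'), e₀.symm (a • z) = a • e₀.symm z := by
    intro a z
    rw [← algebraMap_smul R' a z, map_smul, algebraMap_smul]
  -- powers move the grading
  have hpow : ∀ (v : ℕ) (i : ZMod r) (x : M), x ∈ Mj i → t ^ v • x ∈ Mj (i + (v : ZMod r)) := by
    intro v
    induction v with
    | zero => intro i x hx; simpa using hx
    | succ v ih =>
      intro i x hx
      have h1 : t ^ (v + 1) • x = t • (t ^ v • x) := by rw [pow_succ, mul_comm, mul_smul]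
      rw [h1]
      have h2 := ht_mem _ _ (ih i x hx)
      have h3 : i + (v : ZMod r) + 1 = i + ((v + 1 : ℕ) : ZMod r) := by push_cast; ring
      rwa [h3] at h2
  -- decompose the generator
  obtain ⟨c, hc, hcsum⟩ := isInternal_exists_sum Mj hinternal (e₀.symm 1)
  have hsum1 : ∑ i, e₀ (c i) = 1 := by
    rw [← map_sum, hcsum, e₀.apply_symm_apply]
  have hex : ∃ j, e₀ (c j) ∉ rootIdeal R r s := by
    by_contra h
    push_neg at h
    exact one_notMem_rootIdeal hsm (hsum1 ▸ Ideal.sum_mem _ fun i _ => h i)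
  obtain ⟨j, hj⟩ := hex
  have hunit : IsUnit (e₀ (c j)) := isUnit_of_notMem_rootIdeal hsm hj
  set u := hunit.unit with hudef
  have hu : (u : R') = e₀ (c j) := hunit.unit_spec
  set e : M ≃ₗ[R'] R' := e₀.trans (unitMulEquiv u⁻¹) with hedef
  have hesymm : ∀ y : R', e.symm y = e₀.symm (y * ↑u) := by
    intro y
    have h1 : e.symm y = e₀.symm (y * ↑(u⁻¹)⁻¹) := rfl
    rw [inv_inv] at h1
    exact h1
  have hes : ∀ (a : R) (v : ℕ), e.symm (a • t ^ v) = a • (t ^ v • c j) := by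
    intro a v
    rw [hesymm, smul_mul_assoc, smul_e₀symm]
    congr 1
    rw [hu, ← smul_eq_mul, map_smul, e₀.symm_apply_apply]
  -- the two graded conditions for e, with shift -j
  have cond2 : ∀ i : ZMod r, ∀ y ∈ RootRing.grading R r s (i + -j), e.symm y ∈ Mj i := by
    intro i y hy
    rw [RootRing.grading] at hy
    obtain ⟨a, ha⟩ := Submodule.mem_span_singleton.mp hy
    rw [← ha, hes]
    have h := hpow ((i + -j).val) j (c j) (hc j)
    have hidx : j + (((i + -j).val : ℕ) : ZMod r) = i := by
      rw [show (((i + -j).val : ℕ) : ZMod r) = i + -j from ZMod.natCast_rightInverse _]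
      ring
    rw [hidx] at h
    exact Submodule.smul_mem _ _ h
  have cond1 : ∀ i : ZMod r, ∀ x ∈ Mj i, e x ∈ RootRing.grading R r s (i + -j) := by
    intro i x hx
    obtain ⟨a, ha⟩ := rootRing_decomp (e x)
    have hx2 : x = ∑ k : ZMod r, a k • (t ^ (k.val) • c j) := by
      have h1 := congrArg e.symm ha
      rw [e.symm_apply_apply, map_sum] at h1
      rw [h1]
      exact Finset.sum_congr rfl fun k _ => hes (a k) k.val
    set w : ZMod r → M := fun l => a (l - j) • (t ^ ((l - j).val) • c j) with hwdef
    have hwmem : ∀ l, w l ∈ Mj l := by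
      intro l
      have h := hpow ((l - j).val) j (c j) (hc j)
      have hidx : j + ((((l - j).val : ℕ)) : ZMod r) = l := by
        rw [show ((((l - j).val : ℕ)) : ZMod r) = l - j from ZMod.natCast_rightInverse _]
        ring
      rw [hidx] at h
      exact Submodule.smul_mem _ _ h
    have hwsum : ∑ l, w l = x := by
      rw [hx2]
      exact Fintype.sum_equiv (Equiv.subRight j) w (fun k => a k • (t ^ (k.val) • c j))
        (fun l => rfl)
    have hw0 : ∀ l, l ≠ i → w l = 0 := by
      intro l hl
      set w' : ZMod r → M := fun l' => w l' - if l' = i then x else 0 with hw'def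
      have hw'mem : ∀ l', w' l' ∈ Mj l' := by
        intro l'
        by_cases h : l' = i
        · subst h; simpa [hw'def] using Submodule.sub_mem _ (hwmem l') hx
        · simpa [hw'def, h] using hwmem l'
      have hw'sum : ∑ l', w' l' = 0 := by
        rw [hw'def]
        rw [Finset.sum_sub_distrib, hwsum, Finset.sum_ite_eq' Finset.univ i (fun _ => x),
          if_pos (Finset.mem_univ i), sub_self]
      have h := isInternal_sum_eq_zero Mj hinternal w' hw'mem hw'sum l
      simpa [hw'def, hl] using h
    have hterm0 : ∀ k : ZMod r, k ≠ i - j → a k • t ^ (k.val) = (0 : R') := by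
      intro k hk
      have hne : k + j ≠ i := fun h => hk (by rw [← h]; ring)
      have h1 : e.symm (a k • t ^ k.val) = w (k + j) := by
        rw [hes]
        show _ = a (k + j - j) • (t ^ ((k + j - j).val) • c j)
        rw [add_sub_cancel_right]
      have h2 : e.symm (a k • t ^ k.val) = e.symm 0 := by
        rw [h1, hw0 (k + j) hne, map_zero]
      exact e.symm.injective h2
    have hfin : e x = a (i - j) • t ^ ((i - j).val) := by
      rw [ha]
      refine Finset.sum_eq_single (i - j) (fun k _ hk => hterm0 k hk) ?_
      intro h; exact absurd (Finset.mem_univ _) h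
    rw [hfin, RootRing.grading]
    have hij : i + -j = i - j := by ring
    rw [hij]
    exact Submodule.smul_mem _ _ (Submodule.subset_span rfl)
  refine ⟨-j, ⟨e, cond1, cond2⟩, ?_⟩
  rintro j' ⟨e', h1', h2'⟩
  by_contra hne
  have hd : j + j' ≠ 0 := by
    intro h
    exact hne (eq_neg_of_add_eq_zero_right h)
  -- `x₁ = e.symm 1` is homogeneous of degree `j`
  have h1g : (1 : R') ∈ RootRing.grading R r s (j + -j) := by
    rw [RootRing.grading]
    have : (j + -j : ZMod r) = 0 := by ring
    rw [this, ZMod.val_zero, pow_zero]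
    exact Submodule.subset_span rfl
  have hx₁ : e.symm 1 ∈ Mj j := cond2 j 1 h1g
  have hu' : e' (e.symm 1) ∈ RootRing.grading R r s (j + j') := h1' j _ hx₁
  -- it is "a unit", i.e. generates the unit ideal
  have hsurj : ∃ z : R', z * e' (e.symm 1) = 1 := by
    obtain ⟨z, hz⟩ := (e.symm.trans e').surjective 1
    refine ⟨z, ?_⟩
    have h3 : (e.symm.trans e') z = z * (e.symm.trans e') 1 := by
      conv_lhs => rw [show z = z • (1 : R') by rw [smul_eq_mul, mul_one]]
      rw [map_smul, smul_eq_mul]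
    rw [hz] at h3
    have h4 : (e.symm.trans e') (1 : R') = e' (e.symm 1) := rfl
    rw [h4] at h3
    exact h3.symm
  obtain ⟨z, hz⟩ := hsurj
  rw [RootRing.grading] at hu'
  obtain ⟨b, hb⟩ := Submodule.mem_span_singleton.mp hu'
  have hval : (j + j').val ≠ 0 := fun h => hd ((ZMod.val_eq_zero _).mp h)
  obtain ⟨v, hv⟩ := Nat.exists_eq_succ_of_ne_zero hval
  have hmem : e' (e.symm 1) ∈ Ideal.span {t} := by
    rw [← hb, hv, pow_succ, ← smul_mul_assoc]
    exact Ideal.mem_span_singleton'.mpr ⟨b • t ^ v, rfl⟩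
  have h1mem : (1 : R') ∈ rootIdeal R r s :=
    Ideal.mem_sup_left (hz ▸ Ideal.mul_mem_left _ z hmem)
  exact one_notMem_rootIdeal hsm h1mem
end
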